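/- Set T_q(l) = q^{-l} + (-1)^l q^{-l} - q^l + (-1)^l q^l - 2(-1)^l (note T_q(0) = 0). Then for every nonnegative integer n and every x ≠ 0, Rubin's q-differential operator applied to the higher-order q-Genocchi polynomial satisfies ∂_q G_{n,q}^{(α)}(x) = (1/(2(1-q))) · Σ_{l=1}^{n} binom(n,l)_q · T_q(l) · x^{l-1} · G_{n-l,q}^{(α)}, where G_{n,q}^{(α)} = G_{n,q}^{(α)}(0). -/

import Mathlib

open PowerSeries Finset

/-- The `q`-number `[n]_q = (1 - q^n)/(1 - q)`. -/
noncomputable def qNum (q : ℂ) (n : ℕ) : ℂ := (1 - q ^ n) / (1 - q)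

/-- The `q`-factorial `[n]_q! = [n]_q [n-1]_q ⋯ [1]_q`, with `[0]_q! = 1`. -/
noncomputable def qFact (q : ℂ) : ℕ → ℂ
  | 0 => 1
  | n + 1 => qNum q (n + 1) * qFact q n

/-- The Gaussian `q`-binomial coefficient `[n]_q! / ([k]_q! [n-k]_q!)`. -/
noncomputable def qBinom (q : ℂ) (n k : ℕ) : ℂ :=
  qFact q n / (qFact q k * qFact q (n - k))

/-- `e_q(zx)` as a formal power series in `z`: `∑ x^l z^l / [l]_q!`. -/
noncomputable def qExpGF (q x : ℂ) : PowerSeries ℂ :=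
  PowerSeries.mk fun l => x ^ l / qFact q l

/-- The generating function `([2]_q z / (e_q(z)+1))^α e_q(zx)` of the
higher-order `q`-Genocchi polynomials, as a formal power series in `z`. -/
noncomputable def qGenocchiGF (q : ℂ) (α : ℕ) (x : ℂ) : PowerSeries ℂ :=
  (PowerSeries.C (qNum q 2) * PowerSeries.X * (qExpGF q 1 + 1)⁻¹) ^ α * qExpGF q x

/-- `T_q(l) = q^{-l} + (-1)^l q^{-l} - q^l + (-1)^l q^l - 2(-1)^l` (so `T_q(0) = 0`). -/
noncomputable def Tq (q : ℂ) (l : ℕ) : ℂ :=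
  q ^ (-(l : ℤ)) + (-1) ^ l * q ^ (-(l : ℤ)) - q ^ l + (-1) ^ l * q ^ l - 2 * (-1) ^ l

/-!
The generating function factors as `(its value at x = 0) · e_q(zx)`, so comparing coefficients
gives the Appell expansion `G_n(x) = ∑_l binom(n,l)_q x^l G_{n-l}(0)`, valid once no `[k]_q!`
vanishes, i.e. once `q` is not a root of unity. Rubin's operator is linear and sends `x^l` to
`T_q(l) x^(l-1) / (2(1-q))`, and `T_q(0) = 0` removes the constant term.
-/

lemma qNum_ne_zero {q : ℂ} (hq : ¬IsOfFinOrder q) {n : ℕ} (hn : 0 < n) : qNum q n ≠ 0 := by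
  have hpow : ∀ k, 0 < k → 1 - q ^ k ≠ 0 := fun k hk h =>
    hq (isOfFinOrder_iff_pow_eq_one.2 ⟨k, hk, (sub_eq_zero.1 h).symm⟩)
  exact div_ne_zero (hpow n hn) (by simpa using hpow 1 one_pos)

lemma qFact_ne_zero {q : ℂ} (hq : ¬IsOfFinOrder q) (n : ℕ) : qFact q n ≠ 0 := by
  induction n with
  | zero => exact one_ne_zero
  | succ m ih => exact mul_ne_zero (qNum_ne_zero hq m.succ_pos) ih

lemma not_isOfFinOrder_of_norm_lt_one {q : ℂ} (hq : ‖q‖ < 1) : ¬IsOfFinOrder q :=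
  fun h => hq.ne h.norm_eq_one

lemma qExpGF_zero (q : ℂ) : qExpGF q 0 = 1 := by
  ext (_ | _) <;> simp [qExpGF, qFact, PowerSeries.coeff_one]

lemma qGenocchiGF_eq_mul_qExpGF (q : ℂ) (α : ℕ) (x : ℂ) :
    qGenocchiGF q α x = qGenocchiGF q α 0 * qExpGF q x := by
  rw [qGenocchiGF, qGenocchiGF, qExpGF_zero, mul_one]

lemma qGenocchi_eq_sum {q : ℂ} (hq : ¬IsOfFinOrder q) {α : ℕ} {G : ℕ → ℂ → ℂ}
    (hG : ∀ x : ℂ, PowerSeries.mk (fun n => G n x / qFact q n) = qGenocchiGF q α x)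
    (n : ℕ) (x : ℂ) :
    G n x = ∑ l ∈ range (n + 1), qBinom q n l * G (n - l) 0 * x ^ l := by
  have hcoeff := congrArg (coeff n) (hG x)
  rw [qGenocchiGF_eq_mul_qExpGF, ← hG 0, coeff_mul,
    Nat.sum_antidiagonal_eq_sum_range_succ (fun i j => coeff i _ * coeff j _)] at hcoeff
  simp only [coeff_mk, qExpGF] at hcoeff
  rw [div_eq_iff (qFact_ne_zero hq n)] at hcoeff
  rw [hcoeff, sum_mul, ← sum_range_reflect]
  refine sum_congr rfl fun l hl => ?_
  have hln : l ≤ n := Nat.lt_succ_iff.1 (mem_range.1 hl)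
  rw [show n + 1 - 1 - l = n - l by omega, Nat.sub_sub_self hln, qBinom]
  field_simp [qFact_ne_zero hq]

/-- The numerator of Rubin's operator: `∂_q f x = rubinDiffNum q f x / (2 (1 - q) x)`. -/
noncomputable def rubinDiffNum (q : ℂ) (f : ℂ → ℂ) (x : ℂ) : ℂ :=
  f (q⁻¹ * x) + f (-(q⁻¹ * x)) - f (q * x) + f (-(q * x)) - 2 * f (-x)

lemma rubinDiffNum_pow (q : ℂ) (l : ℕ) (x : ℂ) :
    rubinDiffNum q (· ^ l) x = Tq q l * x ^ l := by
  rw [rubinDiffNum, Tq, zpow_neg, zpow_natCast, neg_pow (q⁻¹ * x), neg_pow (q * x), neg_pow x,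
    mul_pow, mul_pow, inv_pow]
  ring

lemma rubinDiffNum_sum_mul_pow (q : ℂ) (s : Finset ℕ) (c : ℕ → ℂ) (x : ℂ) :
    rubinDiffNum q (fun y => ∑ l ∈ s, c l * y ^ l) x = ∑ l ∈ s, c l * Tq q l * x ^ l := by
  simp only [rubinDiffNum, mul_sum, ← sum_add_distrib, ← sum_sub_distrib]
  refine sum_congr rfl fun l _ => ?_
  have hpow := rubinDiffNum_pow q l x
  rw [rubinDiffNum] at hpow
  linear_combination c l * hpow

lemma Tq_zero (q : ℂ) : Tq q 0 = 0 := by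
  norm_num [Tq]

lemma sum_range_succ_mul_Tq_mul_pow (q : ℂ) (c : ℕ → ℂ) (n : ℕ) (x : ℂ) :
    ∑ l ∈ range (n + 1), c l * Tq q l * x ^ l =
      x * ∑ l ∈ Icc 1 n, c l * Tq q l * x ^ (l - 1) := by
  rw [sum_range_succ', Tq_zero, mul_zero, zero_mul, add_zero, mul_sum,
    ← Ico_add_one_right_eq_Icc, sum_Ico_eq_sum_range, Nat.add_sub_cancel]
  refine sum_congr rfl fun l _ => ?_
  rw [add_comm 1 l, Nat.add_sub_cancel, pow_succ]
  ring

theorem rubin_qDeriv_qGenocchi_general (q : ℂ) (hq1 : ‖q‖ < 1)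
    (α : ℕ) (G : ℕ → ℂ → ℂ)
    (hG : ∀ x : ℂ, PowerSeries.mk (fun n => G n x / qFact q n) = qGenocchiGF q α x) :
    ∀ (n : ℕ) (x : ℂ), x ≠ 0 →
      (G n (q⁻¹ * x) + G n (-(q⁻¹ * x)) - G n (q * x) + G n (-(q * x)) - 2 * G n (-x)) /
          (2 * (1 - q) * x) =
        (1 / (2 * (1 - q))) *
          ∑ l ∈ Finset.Icc 1 n, qBinom q n l * Tq q l * x ^ (l - 1) * G (n - l) 0 := by
  intro n x hx
  have hGn : G n = fun y => ∑ l ∈ range (n + 1), qBinom q n l * G (n - l) 0 * y ^ l :=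
    funext (qGenocchi_eq_sum (not_isOfFinOrder_of_norm_lt_one hq1) hG n)
  change rubinDiffNum q (G n) x / _ = _
  rw [hGn, rubinDiffNum_sum_mul_pow, sum_range_succ_mul_Tq_mul_pow, mul_comm x,
    mul_div_mul_right _ _ hx, one_div_mul_eq_div]
  exact congrArg (· / _) (sum_congr rfl fun l _ => by ring)

/-- Rubin's `q`-differential operator applied to the higher-order `q`-Genocchi
polynomial: for every `n ≥ 0` and `x ≠ 0`,
`∂_q G_{n,q}^{(α)}(x) = (1/(2(1-q))) ∑_{l=1}^{n} binom(n,l)_q T_q(l) x^{l-1} G_{n-l,q}^{(α)}`,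
where `G_{m,q}^{(α)} = G_{m,q}^{(α)}(0)`. -/
theorem rubin_qDeriv_qGenocchi (q : ℂ) (hq0 : 0 < ‖q‖) (hq1 : ‖q‖ < 1)
    (α : ℕ) (hα : 0 < α) (G : ℕ → ℂ → ℂ)
    (hG : ∀ x : ℂ, PowerSeries.mk (fun n => G n x / qFact q n) = qGenocchiGF q α x) :
    ∀ (n : ℕ) (x : ℂ), x ≠ 0 →
      (G n (q⁻¹ * x) + G n (-(q⁻¹ * x)) - G n (q * x) + G n (-(q * x)) - 2 * G n (-x)) /
          (2 * (1 - q) * x) =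
        (1 / (2 * (1 - q))) *
          ∑ l ∈ Finset.Icc 1 n, qBinom q n l * Tq q l * x ^ (l - 1) * G (n - l) 0 :=
  rubin_qDeriv_qGenocchi_general q hq1 α G hG
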